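/- arXiv:1610.04143 — 4 statements merged into one kernel-verified Lean document; each statement's English description precedes it below -/
import Mathlib

section
/- Let G be a group and let H be a non-trivial finite subgroup of G whose normalizer N_G(H) has finite index in G (equivalently, H has only finitely many conjugates in G). Then G contains a non-trivial finite normal subgroup. -/
universe u

/-- The Gromov product `(x·y)_w = (d(x,w)+d(y,w)-d(x,y))/2`. -/
noncomputable def gromovProd {X : Type*} [MetricSpace X] (w x y : X) : ℝ :=
  (dist x w + dist y w - dist x y) / 2

/-- A metric space is `δ`-hyperbolic if the Gromov products satisfy the four-point condition. -/
def IsDeltaHyperbolic (X : Type*) [MetricSpace X] (δ : ℝ) : Prop :=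
  ∀ w x y z : X, min (gromovProd w x y) (gromovProd w y z) - δ ≤ gromovProd w x z

/-- A metric space is geodesic if any two points are joined by an isometric image of a
real interval. -/
def IsGeodesicSpace (X : Type*) [MetricSpace X] : Prop :=
  ∀ x y : X, ∃ f : ℝ → X, f 0 = x ∧ f (dist x y) = y ∧
    ∀ s ∈ Set.Icc (0 : ℝ) (dist x y), ∀ t ∈ Set.Icc (0 : ℝ) (dist x y),
      dist (f s) (f t) = |s - t|

/-- An isometric action (given as a homomorphism to the isometry group) is acylindrical if
for every `ε > 0` there are `M, N` such that for all `x, y` at distance at least `M`, at most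
`N` group elements move both `x` and `y` by at most `ε`. -/
def AcylindricalAction {G X : Type*} [Group G] [MetricSpace X] (φ : G →* (X ≃ᵢ X)) : Prop :=
  ∀ ε : ℝ, 0 < ε → ∃ M : ℝ, ∃ N : ℕ, ∀ x y : X, M ≤ dist x y →
    {g : G | dist x (φ g x) ≤ ε ∧ dist y (φ g y) ≤ ε}.Finite ∧
    {g : G | dist x (φ g x) ≤ ε ∧ dist y (φ g y) ≤ ε}.ncard ≤ N

/-- The action is cobounded if some orbit is `R`-dense. -/
def CoboundedAction {G X : Type*} [Group G] [MetricSpace X] (φ : G →* (X ≃ᵢ X)) : Prop :=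
  ∃ x₀ : X, ∃ R : ℝ, ∀ x : X, ∃ g : G, dist x (φ g x₀) ≤ R

/-- A group is virtually cyclic if it has a cyclic subgroup of finite index. -/
def VirtuallyCyclic (G : Type*) [Group G] : Prop :=
  ∃ H : Subgroup G, H.index ≠ 0 ∧ IsCyclic H

/-- The action is non-elementary if it has unbounded orbits and the group is not
virtually cyclic. -/
def NonElementaryAction {G X : Type*} [Group G] [MetricSpace X] (φ : G →* (X ≃ᵢ X)) : Prop :=
  (∃ x₀ : X, ¬ Bornology.IsBounded (Set.range fun g : G => φ g x₀)) ∧ ¬ VirtuallyCyclic G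

/-- A subgroup is elliptic if its orbits are bounded. -/
def EllipticSubgroup {G X : Type*} [Group G] [MetricSpace X] (φ : G →* (X ≃ᵢ X))
    (H : Subgroup G) : Prop :=
  ∀ x : X, Bornology.IsBounded (Set.range fun h : H => φ (h : G) x)

/-- The translation length of an isometry. -/
noncomputable def translationLength {X : Type*} [MetricSpace X] (f : X ≃ᵢ X) : ℝ :=
  ⨅ y : X, dist y (f y)

/-- The `r`-quasi-axis of an isometry: the set of its `r`-quasi-minimal points. -/
def quasiAxis {X : Type*} [MetricSpace X] (r : ℝ) (f : X ≃ᵢ X) : Set X :=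
  {x : X | dist x (f x) ≤ translationLength f + r}

/-- An isometry is loxodromic if `n ↦ fⁿ x₀` is a quasi-isometric embedding of `ℤ`. -/
def IsLoxodromicIsometry {X : Type*} [MetricSpace X] (f : X ≃ᵢ X) : Prop :=
  ∃ x₀ : X, ∃ lam c : ℝ, 1 ≤ lam ∧ 0 ≤ c ∧ ∀ m n : ℤ,
    (|m - n| : ℝ) / lam - c ≤ dist ((f ^ m) x₀) ((f ^ n) x₀) ∧
    dist ((f ^ m) x₀) ((f ^ n) x₀) ≤ lam * (|m - n| : ℝ) + c

/-- `Fix_K(H)`: the set of points moved by at most `K` by every element of `H`. -/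
def fixSet {G X : Type*} [Group G] [MetricSpace X] (φ : G →* (X ≃ᵢ X)) (H : Subgroup G)
    (K : ℝ) : Set X :=
  {x : X | ∀ h ∈ H, dist x (φ h x) ≤ K}

/-- A group has no non-trivial finite normal subgroup. -/
def NoNontrivialFiniteNormalSubgroup (G : Type*) [Group G] : Prop :=
  ∀ N : Subgroup G, N.Normal → (N : Set G).Finite → N = ⊥

/-- The canonical homomorphism from the free product of two subgroups of `G` to `G`. -/
noncomputable def freeProdHom {G : Type*} [Group G] (A B : Subgroup G) :
    Monoid.Coprod A B →* G :=
  Monoid.Coprod.lift A.subtype B.subtype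

/-- A group is acylindrically hyperbolic if it admits a non-elementary, acylindrical,
cobounded action by isometries on a geodesic `δ`-hyperbolic space for some `δ ≥ 0`. -/
def AcylindricallyHyperbolic (G : Type u) [Group G] : Prop :=
  ∃ (X : Type u) (_ : MetricSpace X) (δ : ℝ) (φ : G →* (X ≃ᵢ X)),
    0 ≤ δ ∧ IsGeodesicSpace X ∧ IsDeltaHyperbolic X δ ∧
    AcylindricalAction φ ∧ CoboundedAction φ ∧ NonElementaryAction φ

section DietzmannAux
open scoped commutatorElement
variable {G' : Type*} [Group G']

private lemma central_swap {z : G'} (hz : z ∈ Subgroup.center G') (g : G') :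
    z * g * z⁻¹ = g := by
  rw [← Subgroup.mem_center_iff.mp hz g, mul_inv_cancel_right]

private lemma commutator_mul_central_left {z : G'} (hz : z ∈ Subgroup.center G') (a b : G') :
    ⁅a * z, b⁆ = ⁅a, b⁆ := by
  have h : ⁅a * z, b⁆ = a * (z * b * z⁻¹) * a⁻¹ * b⁻¹ := by
    rw [commutatorElement_def]; group
  rw [h, central_swap hz b, ← commutatorElement_def]

private lemma commutator_mul_central_right {w : G'} (hw : w ∈ Subgroup.center G') (a b : G') :
    ⁅a, b * w⁆ = ⁅a, b⁆ := by
  have h : ⁅a, b * w⁆ = a * b * (w * a⁻¹ * w⁻¹) * b⁻¹ := by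
    rw [commutatorElement_def]; group
  rw [h, central_swap hw a⁻¹, ← commutatorElement_def]

private lemma finite_commutatorSet_of_center_finiteIndex
    [(Subgroup.center G').FiniteIndex] : Finite (commutatorSet G') := by
  have hsub : commutatorSet G' ⊆ Set.range
      (fun p : (G' ⧸ Subgroup.center G') × (G' ⧸ Subgroup.center G') =>
        ⁅Quotient.out p.1, Quotient.out p.2⁆) := by
    rintro x ⟨g, h, rfl⟩
    refine ⟨((g : G' ⧸ Subgroup.center G'), (h : G' ⧸ Subgroup.center G')), ?_⟩
    have hg : ((Quotient.out ((g : G' ⧸ Subgroup.center G'))))⁻¹ * g ∈ Subgroup.center G' := by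
      rw [← QuotientGroup.eq, QuotientGroup.out_eq']
    have hh : ((Quotient.out ((h : G' ⧸ Subgroup.center G'))))⁻¹ * h ∈ Subgroup.center G' := by
      rw [← QuotientGroup.eq, QuotientGroup.out_eq']
    calc ⁅Quotient.out ((g : G' ⧸ Subgroup.center G')),
          Quotient.out ((h : G' ⧸ Subgroup.center G'))⁆
        = ⁅Quotient.out ((g : G' ⧸ Subgroup.center G')) *
            ((Quotient.out ((g : G' ⧸ Subgroup.center G')))⁻¹ * g),
           Quotient.out ((h : G' ⧸ Subgroup.center G')) *
            ((Quotient.out ((h : G' ⧸ Subgroup.center G')))⁻¹ * h)⁆ := by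
          rw [commutator_mul_central_left hg, commutator_mul_central_right hh]
      _ = ⁅g, h⁆ := by rw [mul_inv_cancel_left, mul_inv_cancel_left]
  exact ((Set.finite_range _).subset hsub).to_subtype

end DietzmannAux

private lemma dietzmann {G' : Type*} [Group G'] (S : Set G') (hS : S.Finite)
    (hconj : ∀ g : G', ∀ x ∈ S, g * x * g⁻¹ ∈ S)
    (htor : ∀ x ∈ S, IsOfFinOrder x) : Finite (Subgroup.closure S) := by
  haveI := hS.to_subtype
  haveI hZ : (Subgroup.centralizer S).FiniteIndex := by
    have key : ∀ x : S, (Subgroup.centralizer {(x : G')}).FiniteIndex := by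
      intro x
      rw [Subgroup.centralizer_eq_comap_stabilizer]
      constructor
      refine (Subgroup.index_comap_of_surjective _
        (f := (ConjAct.toConjAct : G' ≃* ConjAct G').toMonoidHom) (MulEquiv.surjective ConjAct.toConjAct)).trans_ne ?_
      rw [MulAction.index_stabilizer]
      have horb : MulAction.orbit (ConjAct G') (x : G') ⊆ S := by
        rintro y ⟨c, rfl⟩
        exact hconj (ConjAct.ofConjAct c) x x.2
      have hne : (MulAction.orbit (ConjAct G') (x : G')).Nonempty :=
        ⟨_, MulAction.mem_orbit_self _⟩
      exact ((Set.ncard_pos (hS.subset horb)).mpr hne).ne'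
    haveI := Subgroup.finiteIndex_iInf key
    refine Subgroup.finiteIndex_of_le (H := ⨅ x : S, Subgroup.centralizer {(x : G')}) ?_
    intro g hg
    rw [Subgroup.mem_iInf] at hg
    rw [Subgroup.mem_centralizer_iff]
    intro y hy
    exact Subgroup.mem_centralizer_iff.mp (hg ⟨y, hy⟩) y rfl
  set N := Subgroup.closure S with hN
  haveI : Group.FG ↥N := Group.closure_finite_fg S
  have hcen : (Subgroup.centralizer S).subgroupOf N ≤ Subgroup.center ↥N := by
    rintro ⟨z, hzN⟩ hz
    rw [Subgroup.mem_subgroupOf] at hz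
    rw [Subgroup.mem_center_iff]
    rintro ⟨n, hn⟩
    have hcomm : Commute n z := by
      induction hn using Subgroup.closure_induction with
      | mem x hx => exact Subgroup.mem_centralizer_iff.mp hz x hx
      | one => exact Commute.one_left z
      | mul x y hx hy h1 h2 => exact Commute.mul_left h1 h2
      | inv x hx h => exact Commute.inv_left h
    exact Subtype.ext hcomm
  haveI : (Subgroup.center ↥N).FiniteIndex := Subgroup.finiteIndex_of_le hcen
  haveI : Finite (commutatorSet ↥N) := finite_commutatorSet_of_center_finiteIndex
  haveI hcf : Finite (_root_.commutator ↥N) := inferInstance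
  have hofsurj : Function.Surjective (Abelianization.of : ↥N →* Abelianization ↥N) :=
    fun q => QuotientGroup.mk'_surjective _ q
  have hT : Subgroup.closure (((↑) : ↥N → G') ⁻¹' S) = (⊤ : Subgroup ↥N) :=
    Subgroup.closure_closure_coe_preimage
  have htop : Subgroup.closure ((Abelianization.of : ↥N →* Abelianization ↥N) ''
      (((↑) : ↥N → G') ⁻¹' S)) = ⊤ := by
    rw [← MonoidHom.map_closure, hT, ← MonoidHom.range_eq_map]
    exact MonoidHom.range_eq_top_of_surjective _ hofsurj
  have htorsion : Monoid.IsTorsion (Abelianization ↥N) := by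
    intro q
    have hq : q ∈ Subgroup.closure ((Abelianization.of : ↥N →* Abelianization ↥N) ''
        (((↑) : ↥N → G') ⁻¹' S)) := by rw [htop]; trivial
    have hle : Subgroup.closure ((Abelianization.of : ↥N →* Abelianization ↥N) ''
        (((↑) : ↥N → G') ⁻¹' S)) ≤ CommGroup.torsion (Abelianization ↥N) := by
      rw [Subgroup.closure_le]
      rintro y ⟨t, ht, rfl⟩
      have h1 : IsOfFinOrder t := by
        have h2 := htor _ ht
        rw [← orderOf_pos_iff] at h2 ⊢
        rwa [Subgroup.orderOf_coe] at h2
      exact (CommGroup.mem_torsion _).mpr (MonoidHom.isOfFinOrder _ h1)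
    exact (CommGroup.mem_torsion _).mp (hle hq)
  haveI : Group.FG (Abelianization ↥N) := Group.fg_of_surjective hofsurj
  haveI hfq : Finite (Abelianization ↥N) := CommGroup.finite_of_fg_torsion _ htorsion
  haveI : Finite (↥N ⧸ _root_.commutator ↥N) := hfq
  exact Finite.of_equiv _
    (Subgroup.groupEquivQuotientProdSubgroup (s := _root_.commutator ↥N)).symm

/-- a non-trivial finite subgroup whose normalizer has finite index yields a
non-trivial finite normal subgroup. -/
theorem exists_finite_normal_of_finite_index_normalizer {G : Type*} [Group G]
    (H : Subgroup G) (hne : H ≠ ⊥) (hfin : (H : Set G).Finite)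
    (hidx : (Subgroup.normalizer (H : Set G)).index ≠ 0) :
    ∃ N : Subgroup G, N.Normal ∧ (N : Set G).Finite ∧ N ≠ ⊥ := by
  classical
  haveI : (Subgroup.normalizer (H : Set G)).FiniteIndex := ⟨hidx⟩
  haveI : Finite ↥H := hfin.to_subtype
  set S := Group.conjugatesOfSet (H : Set G) with hSdef
  have hSfin : S.Finite := by
    have hsub : S ⊆ Set.range (fun p : (G ⧸ (Subgroup.normalizer (H : Set G))) × ↥H =>
        (Quotient.out p.1) * (p.2 : G) * (Quotient.out p.1)⁻¹) := by
      intro x hx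
      obtain ⟨a, haH, hcj⟩ := Group.mem_conjugatesOfSet_iff.mp hx
      obtain ⟨c, hc⟩ := isConj_iff.mp hcj
      set q : G ⧸ (Subgroup.normalizer (H : Set G)) := (c : G ⧸ (Subgroup.normalizer (H : Set G))) with hq
      have hn : c⁻¹ * Quotient.out q ∈ (Subgroup.normalizer (H : Set G)) :=
        QuotientGroup.eq.mp (QuotientGroup.out_eq' q).symm
      set n := c⁻¹ * Quotient.out q with hndef
      have hout : Quotient.out q = c * n := by rw [hndef]; group
      have hmem : n⁻¹ * a * n ∈ H := by
        have h2 := (Subgroup.mem_normalizer_iff.mp (inv_mem hn) a).mp haH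
        rwa [inv_inv] at h2
      refine ⟨(q, ⟨n⁻¹ * a * n, hmem⟩), ?_⟩
      simp only [hout, ← hc]
      group
    exact (Set.finite_range _).subset hsub
  have hconjS : ∀ g : G, ∀ x ∈ S, g * x * g⁻¹ ∈ S := fun g x hx =>
    Group.conj_mem_conjugatesOfSet hx
  have htorS : ∀ x ∈ S, IsOfFinOrder x := by
    intro x hx
    obtain ⟨a, haH, hcj⟩ := Group.mem_conjugatesOfSet_iff.mp hx
    have h1 : IsOfFinOrder a := by
      have h2 := (isTorsion_of_finite (G := ↥H)) ⟨a, haH⟩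
      rw [← orderOf_pos_iff] at h2 ⊢
      rwa [Subgroup.orderOf_mk] at h2
    obtain ⟨c, hc⟩ := isConj_iff.mp hcj
    rw [← hc]
    simpa using MonoidHom.isOfFinOrder (MulAut.conj c).toMonoidHom h1
  haveI hNfin : Finite (Subgroup.closure S) := dietzmann S hSfin hconjS htorS
  refine ⟨Subgroup.normalClosure (H : Set G), Subgroup.normalClosure_normal, ?_, ?_⟩
  · haveI : Finite ↥(Subgroup.normalClosure (H : Set G)) := hNfin
    exact Set.toFinite _
  · intro hbot
    exact hne (le_bot_iff.mp (hbot ▸ Subgroup.le_normalClosure))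
end

section
/- Let G be a group acting acylindrically by isometries on a metric space X, let K ≥ 0, and let H be an infinite subgroup of G. Then the set Fix_K(H) = {x ∈ X : d(x,hx) ≤ K for all h ∈ H} is bounded. -/
universe u

/-- for an acylindrical action, `Fix_K(H)` is bounded when `H` is infinite. -/
theorem fixSet_bounded_of_infinite {G X : Type*} [Group G] [MetricSpace X]
    (φ : G →* (X ≃ᵢ X)) (hacyl : AcylindricalAction φ)
    (K : ℝ) (hK : 0 ≤ K) (H : Subgroup G) (hinf : (H : Set G).Infinite) :
    Bornology.IsBounded (fixSet φ H K) := by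
  obtain ⟨M, N, hMN⟩ := hacyl (K + 1) (by linarith)
  rw [Metric.isBounded_iff]
  refine ⟨M, fun x hx y hy => ?_⟩
  by_contra hlt
  push_neg at hlt
  have hfin := (hMN x y hlt.le).1
  apply hinf
  refine hfin.subset fun g hg => ?_
  exact ⟨(hx g hg).trans (by linarith), (hy g hg).trans (by linarith)⟩
end

section
/- Let G be a group with no non-trivial finite normal subgroups acting acylindrically by isometries on an unbounded metric space X, and let K ≥ 0. Then for every non-trivial subgroup H of G one has Fix_K(H) ≠ X; that is, there exist x ∈ X and h ∈ H with d(x,hx) > K. -/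
universe u

section Dietzmann

open Subgroup
open scoped commutatorElement

private theorem comm_key {G : Type*} [Group G] (a y z : G) (hz : ∀ g, g * z = z * g) :
    ⁅a * z, y⁆ = ⁅a, y⁆ := by
  have h1 : z * y * z⁻¹ = y := by rw [← hz y, mul_assoc, mul_inv_cancel, mul_one]
  calc ⁅a * z, y⁆ = a * (z * y * z⁻¹) * a⁻¹ * y⁻¹ := by
        simp only [commutatorElement_def, mul_inv_rev]; group
    _ = a * y * a⁻¹ * y⁻¹ := by rw [h1]
    _ = ⁅a, y⁆ := by rw [commutatorElement_def]

private theorem comm_key₂ {G : Type*} [Group G] (a b z w : G) (hz : ∀ g, g * z = z * g)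
    (hw : ∀ g, g * w = w * g) : ⁅a * z, b * w⁆ = ⁅a, b⁆ := by
  rw [comm_key a (b*w) z hz, ← commutatorElement_inv, comm_key b a w hw,
    commutatorElement_inv]

/-- Dietzmann's lemma: a finite, conjugation-invariant set of torsion elements
generates a finite subgroup. -/
theorem dietzmann_s8 {G : Type*} [Group G] (T : Set G) (hfin : T.Finite)
    (hconj : ∀ g : G, ∀ t ∈ T, g * t * g⁻¹ ∈ T)
    (htor : ∀ t ∈ T, IsOfFinOrder t) :
    ((Subgroup.closure T : Subgroup G) : Set G).Finite := by
  set N : Subgroup G := Subgroup.closure T with hN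
  rw [← Set.finite_coe_iff]
  have hTN : T ⊆ (N : Set G) := Subgroup.subset_closure
  set T' : Set ↥N := (Subtype.val) ⁻¹' T with hT'
  have hclT' : Subgroup.closure T' = (⊤ : Subgroup ↥N) :=
    Subgroup.closure_closure_coe_preimage
  have hT'fin : T'.Finite := hfin.preimage (Subtype.val_injective.injOn)
  haveI : Finite ↥T := hfin.to_subtype
  haveI hFG : Group.FG ↥N := by
    rw [Group.fg_iff]
    exact ⟨T', hclT', hT'fin⟩
  -- conjugation action of N on T
  let f : ↥N →* Equiv.Perm ↥T :=
    { toFun := fun n =>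
        { toFun := fun t => ⟨(n : G) * t * (n : G)⁻¹, hconj _ _ t.2⟩
          invFun := fun t => ⟨(n : G)⁻¹ * t * (n : G), by
            simpa using hconj ((n : G)⁻¹) _ t.2⟩
          left_inv := fun t => by ext; simp [mul_assoc]
          right_inv := fun t => by ext; simp [mul_assoc] }
      map_one' := by ext t; simp
      map_mul' := fun a b => by ext t; simp [mul_assoc] }
  haveI : Finite f.range := Subtype.finite
  haveI : f.ker.FiniteIndex := Subgroup.finiteIndex_ker f
  have hker : f.ker ≤ Subgroup.center ↥N := by
    intro n hn
    rw [Subgroup.mem_center_iff]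
    have hn' : ∀ t ∈ T, (n : G) * t * (n : G)⁻¹ = t := by
      intro t ht
      have := congrArg (fun (e : Equiv.Perm ↥T) => (e ⟨t, ht⟩ : G)) hn
      simpa [f] using this
    intro m
    have hcomm : ∀ x ∈ Subgroup.closure T, x * (n : G) = (n : G) * x := by
      intro x hx
      induction hx using Subgroup.closure_induction with
      | mem t ht =>
          have := hn' t ht
          calc t * (n:G) = ((n:G) * t * (n:G)⁻¹) * (n:G) := by rw [this]
            _ = (n:G) * t := by group
      | one => simp
      | mul x y hx hy ihx ihy =>
          calc x * y * (n:G) = x * ((n:G) * y) := by rw [mul_assoc, ihy]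
            _ = (n:G) * (x * y) := by rw [← mul_assoc, ihx]; group
      | inv x hx ih =>
          calc x⁻¹ * (n:G) = x⁻¹ * ((n:G) * x) * x⁻¹ := by group
            _ = x⁻¹ * (x * (n:G)) * x⁻¹ := by rw [← ih]
            _ = (n:G) * x⁻¹ := by group
    have := hcomm (m : G) m.2
    ext
    simpa using this
  haveI : (Subgroup.center ↥N).FiniteIndex := Subgroup.finiteIndex_of_le hker
  haveI hQfin : Finite (↥N ⧸ Subgroup.center ↥N) :=
    Subgroup.finite_quotient_of_finiteIndex (H := Subgroup.center ↥N)
  -- commutatorSet of N is finite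
  haveI : Finite (commutatorSet ↥N) := by
    set Q := ↥N ⧸ Subgroup.center ↥N with hQ
    let F : Q × Q → ↥N := fun p => ⁅Quotient.out p.1, Quotient.out p.2⁆
    apply Set.Finite.to_subtype
    apply Set.Finite.subset (Set.finite_range F)
    rintro x ⟨a, b, rfl⟩
    refine ⟨(QuotientGroup.mk a, QuotientGroup.mk b), ?_⟩
    show ⁅Quotient.out (QuotientGroup.mk a), Quotient.out (QuotientGroup.mk b)⁆ = ⁅a, b⁆
    set a' := Quotient.out (QuotientGroup.mk a : Q) with ha'
    set b' := Quotient.out (QuotientGroup.mk b : Q) with hb'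
    have hma : (QuotientGroup.mk a' : Q) = QuotientGroup.mk a := Quotient.out_eq _
    have hmb : (QuotientGroup.mk b' : Q) = QuotientGroup.mk b := Quotient.out_eq _
    have hza : a⁻¹ * a' ∈ Subgroup.center ↥N := QuotientGroup.eq.mp hma.symm
    have hzb : b⁻¹ * b' ∈ Subgroup.center ↥N := QuotientGroup.eq.mp hmb.symm
    rw [Subgroup.mem_center_iff] at hza hzb
    have ea : a' = a * (a⁻¹ * a') := by group
    have eb : b' = b * (b⁻¹ * b') := by group
    rw [ea, eb, comm_key₂ _ _ _ _ hza hzb]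
  haveI : Finite (_root_.commutator ↥N) := inferInstance
  -- abelianization is finite
  haveI : Group.FG (Abelianization ↥N) :=
    Group.fg_of_surjective (f := Abelianization.of (G := ↥N)) QuotientGroup.mk_surjective
  have htorA : Monoid.IsTorsion (Abelianization ↥N) := by
    have hof : ∀ m : ↥N, IsOfFinOrder (Abelianization.of (G := ↥N) m) := by
      intro m
      have hm : m ∈ Subgroup.closure T' := by rw [hclT']; trivial
      induction hm using Subgroup.closure_induction with
      | mem t ht =>
          have htt : IsOfFinOrder t := by
            obtain ⟨k, hk, hk1⟩ := (isOfFinOrder_iff_pow_eq_one).mp (htor _ ht)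
            exact (isOfFinOrder_iff_pow_eq_one).mpr ⟨k, hk, by ext; push_cast [hk1]; rfl⟩
          exact (Abelianization.of (G := ↥N)).isOfFinOrder htt
      | one => simpa using isOfFinOrder_one
      | mul x y _ _ ihx ihy =>
          rw [map_mul]
          exact (Commute.all _ _).isOfFinOrder_mul ihx ihy
      | inv x _ ih =>
          rw [map_inv]
          exact ih.inv
    intro x
    obtain ⟨m, rfl⟩ := (QuotientGroup.mk_surjective (s := _root_.commutator ↥N)) x
    exact hof m
  haveI : Finite (Abelianization ↥N) := CommGroup.finite_of_fg_torsion _ htorA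
  haveI : Finite (↥N ⧸ _root_.commutator ↥N) := ‹Finite (Abelianization ↥N)›
  exact Finite.of_equiv _
    (Subgroup.groupEquivQuotientProdSubgroup (s := _root_.commutator ↥N)).symm

end Dietzmann

/-- if `G` has no non-trivial finite normal subgroup and acts acylindrically
on an unbounded space, then `Fix_K(H) ≠ X` for every non-trivial subgroup `H`. -/
theorem fixSet_ne_univ {G X : Type*} [Group G] [MetricSpace X]
    (hnofin : NoNontrivialFiniteNormalSubgroup G)
    (φ : G →* (X ≃ᵢ X)) (hacyl : AcylindricalAction φ)
    (hunbdd : ¬ Bornology.IsBounded (Set.univ : Set X))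
    (K : ℝ) (hK : 0 ≤ K) (H : Subgroup G) (hH : H ≠ ⊥) :
    ∃ x : X, ∃ h ∈ H, K < dist x (φ h x) := by
  by_contra hcon
  push_neg at hcon
  set T : Set G := Group.conjugatesOfSet (H : Set G) with hT
  have key : ∀ (c g : G) (z : X), dist z (φ (c * g * c⁻¹) z) =
      dist (φ c⁻¹ z) (φ g (φ c⁻¹ z)) := by
    intro c g z
    have h1 : φ (c * g * c⁻¹) z = φ c (φ g (φ c⁻¹ z)) := by
      simp [map_mul, IsometryEquiv.mul_apply]
    have h2 : z = φ c (φ c⁻¹ z) := by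
      rw [← IsometryEquiv.mul_apply, ← map_mul, mul_inv_cancel, map_one]
      rfl
    rw [h1]
    nth_rewrite 1 [h2]
    exact IsometryEquiv.dist_eq (φ c) _ _
  have hmove : ∀ t ∈ T, ∀ z : X, dist z (φ t z) ≤ K := by
    intro t ht z
    rw [hT, Group.mem_conjugatesOfSet_iff] at ht
    obtain ⟨h, hh, hcj⟩ := ht
    rw [isConj_iff] at hcj
    obtain ⟨c, rfl⟩ := hcj
    rw [key]
    exact hcon _ h hh
  obtain ⟨M, Nn, hMN⟩ := hacyl (K + 1) (by linarith)
  obtain ⟨x, y, hxy⟩ : ∃ x y : X, M ≤ dist x y := by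
    by_contra hb
    push_neg at hb
    exact hunbdd (Metric.isBounded_iff.mpr ⟨M, fun a _ b _ => (hb a b).le⟩)
  obtain ⟨hSfin, -⟩ := hMN x y hxy
  have hTfin : T.Finite := hSfin.subset fun t ht =>
    ⟨(hmove t ht x).trans (by linarith), (hmove t ht y).trans (by linarith)⟩
  have hTconj : ∀ g : G, ∀ t ∈ T, g * t * g⁻¹ ∈ T := fun g t ht =>
    Group.conj_mem_conjugatesOfSet ht
  have hTtor : ∀ t ∈ T, IsOfFinOrder t := by
    intro t ht
    have hpow : ∀ k : ℕ, t ^ (k + 1) ∈ T := by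
      intro k
      rw [hT, Group.mem_conjugatesOfSet_iff] at ht ⊢
      obtain ⟨h, hh, hcj⟩ := ht
      rw [isConj_iff] at hcj
      obtain ⟨c, rfl⟩ := hcj
      refine ⟨h ^ (k + 1), pow_mem hh _, isConj_iff.mpr ⟨c, ?_⟩⟩
      rw [conj_pow]
    have hmap : Set.MapsTo (fun k : ℕ => t ^ (k + 1)) Set.univ T := fun k _ => hpow k
    obtain ⟨m, -, n, -, hmn, heq⟩ :=
      Set.infinite_univ.exists_ne_map_eq_of_mapsTo hmap hTfin
    rcases hmn.lt_or_gt with hlt | hlt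
    · refine isOfFinOrder_iff_pow_eq_one.mpr ⟨n - m, by omega, ?_⟩
      have : t ^ (n - m) * t ^ (m + 1) = t ^ (m + 1) := by
        rw [← pow_add]
        rw [show n - m + (m + 1) = n + 1 by omega]
        exact heq.symm
      simpa using mul_right_cancel (this.trans (one_mul _).symm)
    · refine isOfFinOrder_iff_pow_eq_one.mpr ⟨m - n, by omega, ?_⟩
      have : t ^ (m - n) * t ^ (n + 1) = t ^ (n + 1) := by
        rw [← pow_add]
        rw [show m - n + (n + 1) = m + 1 by omega]
        exact heq
      simpa using mul_right_cancel (this.trans (one_mul _).symm)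
  have hfin : ((Subgroup.normalClosure (H : Set G) : Subgroup G) : Set G).Finite :=
    dietzmann_s8 T hTfin hTconj hTtor
  have hbot : Subgroup.normalClosure (H : Set G) = ⊥ :=
    hnofin _ Subgroup.normalClosure_normal hfin
  refine hH (eq_bot_iff.mpr fun h hh => ?_)
  rw [← hbot]
  exact Subgroup.subset_normalClosure hh
end

section
/- Let X be a geodesic δ-hyperbolic metric space and let φ be an isometry of X. If a point p ∈ X is not 300δ-quasi-minimal for φ (i.e., d(p,φp) > inf_{y∈X} d(y,φy) + 300δ), then for any point p' on a geodesic segment from p to φp with d(p,p') = 100δ, one has d(p', φp') ≤ d(p, φp) − 190δ. -/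
universe u

/-- if `p` is not `300δ`-quasi-minimal for an isometry `φ`, then any point
`p'` on a geodesic from `p` to `φp` at distance `100δ` from `p` satisfies
`d(p',φp') ≤ d(p,φp) − 190δ`. -/
theorem dist_decrease_of_not_quasiMinimal {X : Type*} [MetricSpace X]
    (δ : ℝ) (hδ : 0 ≤ δ) (hgeo : IsGeodesicSpace X) (hhyp : IsDeltaHyperbolic X δ)
    (φ : X ≃ᵢ X) (p : X)
    (hp : translationLength φ + 300 * δ < dist p (φ p))
    (f : ℝ → X) (hf0 : f 0 = p) (hf1 : f (dist p (φ p)) = φ p)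
    (hfiso : ∀ s ∈ Set.Icc (0 : ℝ) (dist p (φ p)), ∀ t ∈ Set.Icc (0 : ℝ) (dist p (φ p)),
      dist (f s) (f t) = |s - t|)
    (p' : X) (hp' : ∃ t ∈ Set.Icc (0 : ℝ) (dist p (φ p)), f t = p')
    (hdist : dist p p' = 100 * δ) :
    dist p' (φ p') ≤ dist p (φ p) - 190 * δ := by
  have hne : Nonempty X := ⟨p⟩
  have hiso : ∀ a b : X, dist (φ a) (φ b) = dist a b := fun a b => φ.dist_eq a b
  set D := dist p (φ p) with hD
  -- translation length is nonneg
  have htl : (0:ℝ) ≤ translationLength φ :=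
    Real.iInf_nonneg (fun y => dist_nonneg)
  have hlt : translationLength φ < D - 300 * δ := by linarith
  obtain ⟨y, hy⟩ : ∃ y : X, dist y (φ y) < D - 300 * δ :=
    exists_lt_of_ciInf_lt hlt
  have hL0 : (0:ℝ) ≤ dist y (φ y) := dist_nonneg
  have hD300 : 300 * δ < D := by linarith
  -- identify p' = f (100δ)
  obtain ⟨t, ht, hft⟩ := hp'
  have ht' : t = 100 * δ := by
    have h0 : (0:ℝ) ∈ Set.Icc (0:ℝ) D := ⟨le_refl _, by linarith⟩
    have := hfiso 0 h0 t ht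
    rw [hf0, hft, hdist] at this
    rw [abs_of_nonpos (by linarith [ht.1])] at this
    linarith
  -- distance from p' to φ p
  have hd2 : dist p' (φ p) = D - 100 * δ := by
    have hDm : D ∈ Set.Icc (0:ℝ) D := ⟨by linarith, le_refl _⟩
    have := hfiso t ht D hDm
    rw [hft, hf1] at this
    rw [this, ht', abs_of_nonpos (by linarith [ht.2, ht'])]
    ring_nf
  have hcomm1 : dist (φ p) p = D := dist_comm (φ p) p
  have hcomm2 : dist p' p = 100 * δ := by rw [dist_comm]; exact hdist
  have hcomm3 : dist (φ p) p' = D - 100 * δ := by rw [dist_comm]; exact hd2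
  -- Step 1 : (y · φp)_p ≥ 150δ
  have h1 : 150 * δ ≤ gromovProd p y (φ p) := by
    have htr : dist y (φ p) ≤ dist y (φ y) + dist y p := by
      calc dist y (φ p) ≤ dist y (φ y) + dist (φ y) (φ p) := dist_triangle _ _ _
        _ = dist y (φ y) + dist y p := by rw [hiso]
    unfold gromovProd
    linarith
  -- Step 2 : (φp · p')_p = 100δ
  have h2 : (100:ℝ) * δ ≤ gromovProd p (φ p) p' := by
    unfold gromovProd
    linarith
  -- Step 3 : (y · p')_p ≥ 99δ
  have h3 : 99 * δ ≤ gromovProd p y p' := by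
    have := hhyp p y (φ p) p'
    have hmin : 100 * δ ≤ min (gromovProd p y (φ p)) (gromovProd p (φ p) p') :=
      le_min (by linarith) h2
    linarith
  -- Step 4 : (φy · φp')_{φp} = (y · p')_p ≥ 99δ
  have h4 : 99 * δ ≤ gromovProd (φ p) (φ y) (φ p') := by
    have heq : gromovProd (φ p) (φ y) (φ p') = gromovProd p y p' := by
      unfold gromovProd
      rw [hiso, hiso, hiso]
    rw [heq]; exact h3
  -- Step 5 : (p' · p)_{φp} = D - 100δ
  have h5 : D - 100 * δ ≤ gromovProd (φ p) p' p := by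
    unfold gromovProd
    linarith
  -- Step 6 : (p · φy)_{φp} ≥ 150δ
  have h6 : 150 * δ ≤ gromovProd (φ p) p (φ y) := by
    have htr : dist p (φ y) ≤ dist p y + dist y (φ y) := dist_triangle _ _ _
    have he1 : dist (φ y) (φ p) = dist y p := hiso y p
    have he2 : dist y p = dist p y := dist_comm y p
    unfold gromovProd
    linarith
  -- Step 7 : (p' · φy)_{φp} ≥ 149δ
  have h7 : 149 * δ ≤ gromovProd (φ p) p' (φ y) := by
    have := hhyp (φ p) p' p (φ y)
    have hmin : 150 * δ ≤ min (gromovProd (φ p) p' p) (gromovProd (φ p) p (φ y)) :=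
      le_min (by linarith) h6
    linarith
  -- Step 8 : (p' · φp')_{φp} ≥ 98δ
  have h8 : 98 * δ ≤ gromovProd (φ p) p' (φ p') := by
    have := hhyp (φ p) p' (φ y) (φ p')
    have hmin : 99 * δ ≤ min (gromovProd (φ p) p' (φ y)) (gromovProd (φ p) (φ y) (φ p')) :=
      le_min (by linarith) h4
    linarith
  -- conclude
  have hfin : dist (φ p') (φ p) = 100 * δ := by rw [hiso]; exact hcomm2
  have : gromovProd (φ p) p' (φ p') = (dist p' (φ p) + dist (φ p') (φ p) - dist p' (φ p')) / 2 :=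
    rfl
  rw [this] at h8
  linarith
end
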